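/- If T is a reiteratively hypercyclic bounded operator on a separable infinite-dimensional Banach space X, then for every n ≥ 1 the n-fold product T × ⋯ × T is reiteratively hypercyclic. -/

import Mathlib

/-!
A reiteratively hypercyclic vector `x` of `T` makes `T × ⋯ × T` topologically transitive. The
return set `R = N(x, U)` of an open `U ∋ x` has positive upper Banach density, so it meets its
translate by some difference of any sufficiently long increasing sequence; and the times `d` with
`T^d x` near `0` contain all pairwise differences of arbitrarily long increasing sequences. This
yields `q, q + d ∈ R` with `T^d x` tiny, which is enough to move points near prescribed targets in
all coordinates with one common time. By Baire's theorem the product then has a vector `z` with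
dense orbit.

Given a nonempty open `W`, choose `c` with `y = (T^{c_i} x)_i ∈ W`; since each `T^{c_i}` commutes
with `T`, the return set `N(y, W)` is a return set of `x` and has positive upper Banach density.
Each finite window of that return pattern is reproduced by the orbit of `z` once it passes close
enough to `y`, so `B̄d(N(z, W)) ≥ B̄d(N(y, W)) > 0`.
-/

open Filter Topology

/-- The weighted sum `∑_{j=0}^{N} a_j · 1_A(j)`. -/
noncomputable def wSum (a : ℕ → ℝ) (A : Set ℕ) (N : ℕ) : ℝ :=
  ∑ j ∈ Finset.range (N + 1), Set.indicator A a j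

/-- The upper `a`-density `d̄_a(A)`. -/
noncomputable def upperDensWith (a : ℕ → ℝ) (A : Set ℕ) : ℝ :=
  Filter.limsup (fun N => wSum a A N / ∑ j ∈ Finset.range (N + 1), a j) Filter.atTop

/-- The lower `a`-density `d_a(A)`. -/
noncomputable def lowerDensWith (a : ℕ → ℝ) (A : Set ℕ) : ℝ :=
  Filter.liminf (fun N => wSum a A N / ∑ j ∈ Finset.range (N + 1), a j) Filter.atTop

/-- The (unweighted) upper density `d̄(A)`. -/
noncomputable def upperDens (A : Set ℕ) : ℝ :=
  Filter.limsup
    (fun N : ℕ => (∑ j ∈ Finset.range (N + 1), Set.indicator A (fun _ => (1 : ℝ)) j) / (N + 1))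
    Filter.atTop

/-- The upper Banach density `B̄d(A) = lim_N b_N / N`, `b_N = limsup_k #(A ∩ [k+1, k+N])`
(the limit exists, so it coincides with the limsup used here). -/
noncomputable def upperBanachDens (A : Set ℕ) : ℝ :=
  Filter.limsup
    (fun N : ℕ =>
      (Filter.limsup
          (fun k : ℕ => ∑ j ∈ Finset.Icc (k + 1) (k + N), Set.indicator A (fun _ => (1 : ℝ)) j)
          Filter.atTop) / (N : ℝ))
    Filter.atTop

/-- `v_n(a) = a_n / ∑_{j=0}^{n-1} a_j`. -/
noncomputable def vSeq (a : ℕ → ℝ) (n : ℕ) : ℝ := a n / ∑ j ∈ Finset.range n, a j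

/-- The class `S` of weights: positive non-decreasing sequences tending to `+∞` such that
`(v_n(a))_{n ≥ 1}` is non-increasing and tends to `0`. -/
def memS (a : ℕ → ℝ) : Prop :=
  (∀ n, 0 < a n) ∧ Monotone a ∧ Filter.Tendsto a Filter.atTop Filter.atTop ∧
    (∀ m n : ℕ, 1 ≤ m → m ≤ n → vSeq a n ≤ vSeq a m) ∧
    Filter.Tendsto (vSeq a) Filter.atTop (nhds 0)

/-- `A - k = {n : n + k ∈ A}`. -/
def shiftSet (A : Set ℕ) (k : ℕ) : Set ℕ := {n : ℕ | n + k ∈ A}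

/-- A set of natural numbers has bounded gaps (is syndetic). -/
def Syndetic (K : Set ℕ) : Prop := ∃ m : ℕ, ∀ n : ℕ, (K ∩ Set.Icc n (n + m)).Nonempty

/-- The return set `N(x, U) = {n : T^n x ∈ U}`. -/
def retSet {X : Type*} [NormedAddCommGroup X] [NormedSpace ℂ X] (T : X →L[ℂ] X) (x : X)
    (U : Set X) : Set ℕ :=
  {n : ℕ | (T ^ n) x ∈ U}

/-- The set of hypercyclic vectors of `T`. -/
def HCSet {X : Type*} [NormedAddCommGroup X] [NormedSpace ℂ X] (T : X →L[ℂ] X) : Set X :=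
  {x : X | Dense (Set.range fun n : ℕ => (T ^ n) x)}

/-- The set of `U`-frequently hypercyclic vectors of `T`. -/
def UFHCSet {X : Type*} [NormedAddCommGroup X] [NormedSpace ℂ X] (T : X →L[ℂ] X) : Set X :=
  {x : X | ∀ U : Set X, IsOpen U → U.Nonempty → 0 < upperDens (retSet T x U)}

/-- The set of `U`-frequently hypercyclic vectors of `T` with respect to the weight `a`. -/
def UFHCaSet {X : Type*} [NormedAddCommGroup X] [NormedSpace ℂ X] (a : ℕ → ℝ)
    (T : X →L[ℂ] X) : Set X :=
  {x : X | ∀ U : Set X, IsOpen U → U.Nonempty → 0 < upperDensWith a (retSet T x U)}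

/-- The set of reiteratively hypercyclic vectors of `T`. -/
def RHCSet {X : Type*} [NormedAddCommGroup X] [NormedSpace ℂ X] (T : X →L[ℂ] X) : Set X :=
  {x : X | ∀ U : Set X, IsOpen U → U.Nonempty → 0 < upperBanachDens (retSet T x U)}

/-- `T` is `𝒜`-hypercyclic. -/
def AHC {X : Type*} [NormedAddCommGroup X] [NormedSpace ℂ X] (𝒜 : Set (Set ℕ))
    (T : X →L[ℂ] X) : Prop :=
  ∃ x : X, ∀ U : Set X, IsOpen U → U.Nonempty → retSet T x U ∈ 𝒜

/-- The `n`-fold product `T × ⋯ × T` acting diagonally on `Fin n → X`. -/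
noncomputable def nfold {X : Type*} [NormedAddCommGroup X] [NormedSpace ℂ X] (T : X →L[ℂ] X)
    (n : ℕ) : (Fin n → X) →L[ℂ] (Fin n → X) :=
  ContinuousLinearMap.pi fun i => T.comp (ContinuousLinearMap.proj i)

noncomputable def windowCount (A : Set ℕ) (k N : ℕ) : ℕ := (A ∩ Set.Icc (k + 1) (k + N)).ncard

-- `b_N` in the definition of `upperBanachDens`.
noncomputable def upperWindowCount (A : Set ℕ) (N : ℕ) : ℝ :=
  limsup (fun k => (windowCount A k N : ℝ)) atTop

section UpperBanachDensity

variable {A B : Set ℕ}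

lemma sum_indicator_Icc_eq_windowCount (A : Set ℕ) (k N : ℕ) :
    ∑ j ∈ Finset.Icc (k + 1) (k + N), A.indicator (fun _ => (1 : ℝ)) j = windowCount A k N := by
  classical
  simp only [Set.indicator_apply, Finset.sum_boole, windowCount, ← Set.ncard_coe_finset]
  congr 2
  ext j
  simp [and_comm]

lemma upperBanachDens_eq (A : Set ℕ) :
    upperBanachDens A = limsup (fun N : ℕ => upperWindowCount A N / N) atTop := by
  simp only [upperBanachDens, upperWindowCount, sum_indicator_Icc_eq_windowCount]

lemma windowCount_le (A : Set ℕ) (k N : ℕ) : windowCount A k N ≤ N :=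
  (Set.ncard_le_ncard Set.inter_subset_right (Set.finite_Icc _ _)).trans (by simp)

lemma windowCount_le_of_shift {k N p : ℕ}
    (h : ∀ j ∈ A ∩ Set.Icc (k + 1) (k + N), j + p ∈ B) :
    windowCount A k N ≤ windowCount B (k + p) N :=
  Set.ncard_le_ncard_of_injOn (· + p)
    (fun j hj => ⟨h j hj, by simp only [Set.mem_inter_iff, Set.mem_Icc] at hj ⊢; omega⟩)
    (fun _ _ _ _ => Nat.add_right_cancel) (Set.toFinite _)

lemma isBoundedUnder_windowCount (A : Set ℕ) (N : ℕ) :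
    IsBoundedUnder (· ≤ ·) atTop fun k => (windowCount A k N : ℝ) :=
  isBoundedUnder_of ⟨N, fun k => by exact_mod_cast windowCount_le A k N⟩

lemma isCoboundedUnder_windowCount (A : Set ℕ) (N : ℕ) :
    IsCoboundedUnder (· ≤ ·) atTop fun k => (windowCount A k N : ℝ) :=
  isCoboundedUnder_le_of_le atTop fun _ => Nat.cast_nonneg _

lemma upperWindowCount_nonneg (A : Set ℕ) (N : ℕ) : 0 ≤ upperWindowCount A N :=
  le_limsup_of_frequently_le (Frequently.of_forall fun _ => Nat.cast_nonneg _)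
    (isBoundedUnder_windowCount A N)

lemma upperWindowCount_le (A : Set ℕ) (N : ℕ) : upperWindowCount A N ≤ N :=
  limsup_le_of_le (isCoboundedUnder_windowCount A N)
    (Eventually.of_forall fun k => by exact_mod_cast windowCount_le A k N)

lemma isBoundedUnder_upperWindowCount_div (A : Set ℕ) :
    IsBoundedUnder (· ≤ ·) atTop fun N : ℕ => upperWindowCount A N / N :=
  isBoundedUnder_of ⟨1, fun N => div_le_one_of_le₀ (upperWindowCount_le A N) N.cast_nonneg⟩

lemma isCoboundedUnder_upperWindowCount_div (A : Set ℕ) :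
    IsCoboundedUnder (· ≤ ·) atTop fun N : ℕ => upperWindowCount A N / N :=
  isCoboundedUnder_le_of_le atTop fun N =>
    div_nonneg (upperWindowCount_nonneg A N) N.cast_nonneg

lemma upperWindowCount_le_of_shift {N : ℕ}
    (h : ∀ k, ∃ p, ∀ j ∈ A ∩ Set.Icc (k + 1) (k + N), j + p ∈ B) :
    upperWindowCount A N ≤ upperWindowCount B N := by
  refine le_of_forall_lt_imp_le_of_dense fun c hc => ?_
  refine le_limsup_of_frequently_le ?_ (isBoundedUnder_windowCount B N)
  refine frequently_atTop.2 fun k₀ => ?_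
  obtain ⟨k, hk₀, hk⟩ :=
    frequently_atTop.1 (frequently_lt_of_lt_limsup (isCoboundedUnder_windowCount A N) hc) k₀
  obtain ⟨p, hp⟩ := h k
  refine ⟨k + p, by omega, hk.le.trans ?_⟩
  exact_mod_cast windowCount_le_of_shift hp

lemma upperBanachDens_le_of_shift
    (h : ∀ N k, ∃ p, ∀ j ∈ A ∩ Set.Icc (k + 1) (k + N), j + p ∈ B) :
    upperBanachDens A ≤ upperBanachDens B := by
  rw [upperBanachDens_eq, upperBanachDens_eq]
  exact limsup_le_limsup (Eventually.of_forall fun N =>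
      div_le_div_of_nonneg_right (upperWindowCount_le_of_shift (h N)) N.cast_nonneg)
    (isCoboundedUnder_upperWindowCount_div A) (isBoundedUnder_upperWindowCount_div B)

lemma upperBanachDens_eq_zero_of_finite (hA : A.Finite) : upperBanachDens A = 0 := by
  obtain ⟨K, hK⟩ := hA.bddAbove
  have hzero : ∀ N, upperWindowCount A N = 0 := fun N => by
    refine (limsup_congr ((eventually_ge_atTop K).mono fun k hk => ?_)).trans (limsup_const 0)
    have : A ∩ Set.Icc (k + 1) (k + N) = ∅ :=
      Set.eq_empty_of_forall_notMem fun j hj => by have := hK hj.1; have := hj.2.1; omega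
    simp [windowCount, this]
  simp [upperBanachDens_eq, hzero]

lemma Set.infinite_of_upperBanachDens_pos (hA : 0 < upperBanachDens A) : A.Infinite :=
  fun hfin => hA.ne' (upperBanachDens_eq_zero_of_finite hfin)

lemma card_mul_upperBanachDens_le_one {S : Finset ℕ}
    (hS : Set.InjOn (fun p : ℕ × ℕ => p.1 + p.2) (A ×ˢ (S : Set ℕ))) :
    S.card * upperBanachDens A ≤ 1 := by
  set m := S.sup id
  have hwindow : ∀ k N, windowCount A k N * S.card ≤ N + m := fun k N => by
    have hmaps : ∀ p ∈ (A ∩ Set.Icc (k + 1) (k + N)) ×ˢ (S : Set ℕ),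
        p.1 + p.2 ∈ Set.Icc (k + 1) (k + N + m) := by
      rintro ⟨j, s⟩ ⟨⟨-, hj⟩, hs⟩
      have : s ≤ m := Finset.le_sup (f := id) hs
      simp only [Set.mem_Icc] at hj ⊢
      omega
    have := Set.ncard_le_ncard_of_injOn _ hmaps
      (hS.mono (Set.prod_mono Set.inter_subset_left subset_rfl))
    simp only [Set.ncard_prod, Set.ncard_coe_finset, Set.ncard_Icc_nat] at this
    exact this.trans_eq (by omega)
  rcases S.card.eq_zero_or_pos with h0 | hpos
  · simp [h0]
  have hcard : (0 : ℝ) < S.card := by exact_mod_cast hpos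
  have hN : ∀ N : ℕ, upperWindowCount A N ≤ (N + m) / S.card := fun N =>
    limsup_le_of_le (isCoboundedUnder_windowCount A N) (Eventually.of_forall fun k => by
      rw [le_div_iff₀ hcard]; exact_mod_cast hwindow k N)
  have hlim : Tendsto (fun N : ℕ => (1 + (m : ℝ) / N) / S.card) atTop
      (𝓝 (1 / (S.card : ℝ))) := by
    simpa only [add_zero] using
      ((tendsto_const_div_atTop_nhds_zero_nat (m : ℝ)).const_add 1).div_const (S.card : ℝ)
  have hdens : upperBanachDens A ≤ 1 / S.card := by
    rw [upperBanachDens_eq, ← hlim.limsup_eq]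
    refine limsup_le_limsup ((eventually_gt_atTop 0).mono fun N hN0 => ?_)
      (isCoboundedUnder_upperWindowCount_div A) hlim.isBoundedUnder_le
    have hNpos : (0 : ℝ) < N := by exact_mod_cast hN0
    calc upperWindowCount A N / N ≤ (N + m) / S.card / N :=
          div_le_div_of_nonneg_right (hN N) hNpos.le
      _ = (1 + (m : ℝ) / N) / S.card := by field_simp
  calc S.card * upperBanachDens A ≤ S.card * (1 / S.card) :=
        mul_le_mul_of_nonneg_left hdens hcard.le
    _ = 1 := by field_simp

lemma exists_add_sub_mem_of_one_lt_card_mul {S : Finset ℕ}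
    (h : 1 < S.card * upperBanachDens A) :
    ∃ s ∈ S, ∃ s' ∈ S, s < s' ∧ ∃ a ∈ A, a + (s' - s) ∈ A := by
  by_contra! hcon
  refine h.not_ge (card_mul_upperBanachDens_le_one ?_)
  rintro ⟨a, s⟩ ⟨ha, hs⟩ ⟨a', s'⟩ ⟨ha', hs'⟩ (heq : a + s = a' + s')
  rcases lt_trichotomy s s' with hlt | rfl | hgt
  · exact (hcon s hs s' hs' hlt a' ha' (by rwa [show a' + (s' - s) = a by omega])).elim
  · simp only [Prod.mk.injEq, and_true]
    omega
  · exact (hcon s' hs' s hs hgt a ha (by rwa [show a + (s - s') = a' by omega])).elim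

end UpperBanachDensity

theorem exists_dense_orbit_of_transitive {Y : Type*} [TopologicalSpace Y] [BaireSpace Y]
    [SecondCountableTopology Y] [Nonempty Y] {f : Y → Y} (hf : Continuous f)
    (htrans : ∀ U V : Set Y, IsOpen U → U.Nonempty → IsOpen V → V.Nonempty →
      ∃ m, (U ∩ f^[m] ⁻¹' V).Nonempty) :
    ∃ z, Dense (Set.range fun m => f^[m] z) := by
  obtain ⟨B, hBcount, hBempty, hB⟩ := TopologicalSpace.exists_countable_basis Y
  have hBne : ∀ b ∈ B, b.Nonempty := fun b hb =>
    Set.nonempty_iff_ne_empty.2 fun h => hBempty (h ▸ hb)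
  have hvisit : Dense (⋂ b ∈ B, ⋃ m, f^[m] ⁻¹' b) := by
    refine dense_biInter_of_isOpen
      (fun b hb => isOpen_iUnion fun m => (hB.isOpen hb).preimage (hf.iterate m)) hBcount
      fun b hb => dense_iff_inter_open.2 fun U hU hU' => ?_
    obtain ⟨m, y, hyU, hyb⟩ := htrans U b hU hU' (hB.isOpen hb) (hBne b hb)
    exact ⟨y, hyU, Set.mem_iUnion.2 ⟨m, hyb⟩⟩
  obtain ⟨z, hz⟩ := hvisit.nonempty
  refine ⟨z, hB.dense_iff.2 fun b hb _ => ?_⟩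
  obtain ⟨m, hm⟩ := Set.mem_iUnion.1 (Set.mem_iInter₂.1 hz b hb)
  exact ⟨_, hm, m, rfl⟩

lemma add_mem_ball_of_half {E : Type*} [SeminormedAddCommGroup E] {a b c : E} {r : ℝ}
    (ha : a ∈ Metric.ball c (r / 2)) (hb : b ∈ Metric.ball 0 (r / 2)) :
    a + b ∈ Metric.ball c r := by
  rw [Metric.mem_ball] at *
  calc dist (a + b) c = dist (a + b) (c + 0) := by rw [add_zero]
    _ ≤ dist a c + dist b 0 := dist_add_add_le _ _ _ _
    _ < r / 2 + r / 2 := add_lt_add ha hb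
    _ = r := add_halves r

section Dynamics

variable {X : Type*} [NormedAddCommGroup X] [NormedSpace ℂ X] {T : X →L[ℂ] X} {x : X}

lemma pow_apply_pow_apply (T : X →L[ℂ] X) (p q : ℕ) (w : X) :
    (T ^ p) ((T ^ q) w) = (T ^ (p + q)) w := by
  rw [pow_add]
  rfl

lemma upperBanachDens_retSet_le_of_dense {y z : X} (hz : Dense (Set.range fun m => (T ^ m) z))
    {W : Set X} (hW : IsOpen W) :
    upperBanachDens (retSet T y W) ≤ upperBanachDens (retSet T z W) := by
  refine upperBanachDens_le_of_shift fun N k => ?_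
  set J := retSet T y W ∩ Set.Icc (k + 1) (k + N)
  have hO : IsOpen (⋂ j ∈ J, (T ^ j) ⁻¹' W) :=
    ((Set.finite_Icc _ _).subset Set.inter_subset_right).isOpen_biInter
      fun j _ => hW.preimage (T ^ j).continuous
  obtain ⟨_, ⟨p, rfl⟩, hp⟩ :=
    hz.exists_mem_open hO ⟨y, Set.mem_iInter₂.2 fun j hj => hj.1⟩
  refine ⟨p, fun j hj => ?_⟩
  change (T ^ (j + p)) z ∈ W
  rw [← pow_apply_pow_apply]
  exact Set.mem_iInter₂.1 hp j hj

lemma nfold_pow_apply (T : X →L[ℂ] X) {n : ℕ} (m : ℕ) (w : Fin n → X) (i : Fin n) :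
    (nfold T n ^ m) w i = (T ^ m) (w i) := by
  induction m generalizing w with
  | zero => rfl
  | succ m ih =>
    rw [pow_succ, pow_succ]
    exact ih (nfold T n w)

namespace RHCSet

lemma infinite_retSet (hx : x ∈ RHCSet T) {U : Set X} (hU : IsOpen U) (hU' : U.Nonempty) :
    (retSet T x U).Infinite :=
  Set.infinite_of_upperBanachDens_pos (hx U hU hU')

lemma denseRange_orbit (hx : x ∈ RHCSet T) : DenseRange fun m : ℕ => (T ^ m) x :=
  dense_iff_inter_open.2 fun _ hU hU' =>
    let ⟨m, hm⟩ := (infinite_retSet hx hU hU').nonempty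
    ⟨_, hm, m, rfl⟩

lemma exists_finset_sub_mem_retSet (hx : x ∈ RHCSet T) {W : Set X} (hW : IsOpen W)
    (h0 : (0 : X) ∈ W) (M : ℕ) :
    ∃ S : Finset ℕ, S.card = M ∧ ∀ s ∈ S, ∀ s' ∈ S, s < s' → s' - s ∈ retSet T x W := by
  induction M with
  | zero => exact ⟨∅, rfl, by simp⟩
  | succ M ih =>
    obtain ⟨S, hcard, hS⟩ := ih
    set m := S.sup id
    have hle : ∀ s ∈ S, s ≤ m := fun s hs => Finset.le_sup (f := id) hs
    have hO : IsOpen (⋂ s ∈ S, (T ^ (m - s)) ⁻¹' W) :=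
      isOpen_biInter_finset fun s _ => hW.preimage (T ^ (m - s)).continuous
    obtain ⟨r, hr, hr0⟩ := (infinite_retSet hx hO
      ⟨0, Set.mem_iInter₂.2 fun s _ => by simpa using h0⟩).exists_gt 0
    have hnew : ∀ s ∈ S, m + r - s ∈ retSet T x W := fun s hs => by
      have hr' := Set.mem_iInter₂.1 hr s hs
      rwa [Set.mem_preimage, pow_apply_pow_apply, show m - s + r = m + r - s by
        have := hle s hs; omega] at hr'
    refine ⟨insert (m + r) S, ?_, fun s hs s' hs' hlt => ?_⟩
    · rw [Finset.card_insert_of_notMem fun h => by have := hle _ h; omega, hcard]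
    rcases Finset.mem_insert.1 hs, Finset.mem_insert.1 hs' with ⟨rfl | hs, rfl | hs'⟩
    · omega
    · have := hle s' hs'; omega
    · exact hnew s hs
    · exact hS s hs s' hs' hlt

lemma exists_add_mem_retSet (hx : x ∈ RHCSet T) {U W : Set X} (hU : IsOpen U)
    (hU' : U.Nonempty) (hW : IsOpen W) (h0 : (0 : X) ∈ W) :
    ∃ q d, q ∈ retSet T x U ∧ q + d ∈ retSet T x U ∧ d ∈ retSet T x W := by
  have hpos := hx U hU hU'
  obtain ⟨M, hM⟩ := exists_nat_gt (1 / upperBanachDens (retSet T x U))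
  obtain ⟨S, rfl, hS⟩ := exists_finset_sub_mem_retSet hx hW h0 M
  obtain ⟨s, hs, s', hs', hlt, q, hq, hqd⟩ :=
    exists_add_sub_mem_of_one_lt_card_mul ((div_lt_iff₀ hpos).1 hM)
  exact ⟨q, s' - s, hq, hqd, hS s hs s' hs' hlt⟩

lemma exists_nfold_pow_mem_ball (hx : x ∈ RHCSet T) {n : ℕ} (u v : Fin n → X) {γ : ℝ}
    (hγ : 0 < γ) : ∃ y m, y ∈ Metric.ball u γ ∧ (nfold T n ^ m) y ∈ Metric.ball v γ := by
  set B := Metric.ball (0 : X) (γ / 2)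
  have hvisit : ∀ (w : X) K, ∃ m, K < m ∧ (T ^ m) x ∈ Metric.ball w (γ / 2) := fun w K =>
    let ⟨m, hm, hKm⟩ := (infinite_retSet hx Metric.isOpen_ball
      ⟨w, Metric.mem_ball_self (half_pos hγ)⟩).exists_gt K
    ⟨m, hKm, hm⟩
  have hopen : ∀ c : Fin n → ℕ, IsOpen (⋂ i, (T ^ c i) ⁻¹' B) := fun c =>
    isOpen_iInter_of_finite fun i => Metric.isOpen_ball.preimage (T ^ c i).continuous
  have hzero : ∀ c : Fin n → ℕ, (0 : X) ∈ ⋂ i, (T ^ c i) ⁻¹' B := fun c =>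
    Set.mem_iInter.2 fun i => by simp [B, hγ]
  choose a ha using fun i => hvisit (u i) 0
  obtain ⟨z, hz⟩ := (infinite_retSet hx (hopen a) ⟨0, hzero a⟩).nonempty
  choose h hzh hh using fun i => hvisit (v i) z
  set U := ⋂ i, (T ^ (a i + z)) ⁻¹' B ∩ (T ^ h i) ⁻¹' Metric.ball (v i) (γ / 2)
  have hU : IsOpen U := isOpen_iInter_of_finite fun i =>
    (Metric.isOpen_ball.preimage (T ^ (a i + z)).continuous).inter
      (Metric.isOpen_ball.preimage (T ^ h i).continuous)
  have hxU : x ∈ U := Set.mem_iInter.2 fun i =>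
    ⟨by rw [Set.mem_preimage, ← pow_apply_pow_apply]; exact Set.mem_iInter.1 hz i, hh i⟩
  obtain ⟨q, d, hq, hqd, hd⟩ :=
    exists_add_mem_retSet hx hU ⟨x, hxU⟩ (hopen fun i => h i - z) (hzero _)
  -- In `y i`, the first summand lies near `u i` and `T ^ (z + q)` sends it near `0`;
  -- the second lies near `0` and `T ^ (z + q)` sends it to `T ^ h i (T ^ (q + d) x)`, near `v i`.
  refine ⟨fun i => (T ^ a i) x + (T ^ (h i - z)) ((T ^ d) x), z + q, ?_, ?_⟩
  · refine (Metric.mem_ball.trans (dist_pi_lt_iff hγ)).2 fun i => ?_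
    exact add_mem_ball_of_half (ha i).2 (Set.mem_iInter.1 hd i)
  · refine (Metric.mem_ball.trans (dist_pi_lt_iff hγ)).2 fun i => ?_
    have hsplit : (nfold T n ^ (z + q)) (fun i => (T ^ a i) x + (T ^ (h i - z)) ((T ^ d) x)) i
        = (T ^ h i) ((T ^ (q + d)) x) + (T ^ (a i + z)) ((T ^ q) x) := by
      rw [nfold_pow_apply, map_add, add_comm]
      simp only [pow_apply_pow_apply]
      rw [show z + q + (h i - z + d) = h i + (q + d) by have := hzh i; omega,
        show z + q + a i = a i + z + q by omega]
    rw [hsplit]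
    exact add_mem_ball_of_half (Set.mem_iInter.1 hqd i).2 (Set.mem_iInter.1 hq i).1

lemma nfold_transitive (hx : x ∈ RHCSet T) {n : ℕ} (U V : Set (Fin n → X)) (hU : IsOpen U)
    (hU' : U.Nonempty) (hV : IsOpen V) (hV' : V.Nonempty) :
    ∃ m, (U ∩ (⇑(nfold T n))^[m] ⁻¹' V).Nonempty := by
  obtain ⟨u, hu⟩ := hU'
  obtain ⟨v, hv⟩ := hV'
  obtain ⟨r, hr, hrU⟩ := Metric.isOpen_iff.1 hU u hu
  obtain ⟨s, hs, hsV⟩ := Metric.isOpen_iff.1 hV v hv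
  obtain ⟨y, m, hyu, hyv⟩ := exists_nfold_pow_mem_ball hx u v (lt_min hr hs)
  refine ⟨m, y, hrU (Metric.ball_subset_ball (min_le_left _ _) hyu), ?_⟩
  rw [Set.mem_preimage, ← FunLike.coe_pow_eq_iterate]
  exact hsV (Metric.ball_subset_ball (min_le_right _ _) hyv)

lemma exists_upperBanachDens_retSet_nfold_pos (hx : x ∈ RHCSet T) {n : ℕ}
    {W : Set (Fin n → X)} (hW : IsOpen W) (hW' : W.Nonempty) :
    ∃ y, 0 < upperBanachDens (retSet (nfold T n) y W) := by
  obtain ⟨c, hc⟩ :=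
    (DenseRange.piMap fun _ : Fin n => denseRange_orbit hx).exists_mem_open hW hW'
  set Φ : X →L[ℂ] (Fin n → X) := ContinuousLinearMap.pi fun i => T ^ c i
  have hret : retSet (nfold T n) (Φ x) W = retSet T x (Φ ⁻¹' W) := by
    ext m
    change (nfold T n ^ m) (Φ x) ∈ W ↔ Φ ((T ^ m) x) ∈ W
    congr! 1
    funext i
    rw [nfold_pow_apply]
    change (T ^ m) ((T ^ c i) x) = (T ^ c i) ((T ^ m) x)
    rw [pow_apply_pow_apply, pow_apply_pow_apply, add_comm]
  exact ⟨Φ x, hret ▸ hx _ (hW.preimage Φ.continuous) ⟨x, hc⟩⟩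

end RHCSet

end Dynamics

theorem stmt_11_general {X : Type*} [NormedAddCommGroup X] [NormedSpace ℂ X] [CompleteSpace X]
    [TopologicalSpace.SeparableSpace X] (T : X →L[ℂ] X)
    (hT : (RHCSet T).Nonempty) (n : ℕ) :
    (RHCSet (nfold T n)).Nonempty := by
  obtain ⟨x, hx⟩ := hT
  have : SecondCountableTopology X := UniformSpace.secondCountable_of_separable X
  obtain ⟨z, hz⟩ :=
    exists_dense_orbit_of_transitive (nfold T n).continuous (RHCSet.nfold_transitive hx)
  simp only [← FunLike.coe_pow_eq_iterate] at hz
  refine ⟨z, fun W hW hW' => ?_⟩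
  obtain ⟨y, hy⟩ := RHCSet.exists_upperBanachDens_retSet_nfold_pos hx hW hW'
  exact hy.trans_le (upperBanachDens_retSet_le_of_dense hz hW)

/-- If `T` is reiteratively hypercyclic then every `n`-fold product `T × ⋯ × T` (`n ≥ 1`)
is reiteratively hypercyclic. -/
theorem stmt_11 {X : Type*} [NormedAddCommGroup X] [NormedSpace ℂ X] [CompleteSpace X]
    [TopologicalSpace.SeparableSpace X] (hX : ¬FiniteDimensional ℂ X) (T : X →L[ℂ] X)
    (hT : (RHCSet T).Nonempty) (n : ℕ) (hn : 1 ≤ n) :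
    (RHCSet (nfold T n)).Nonempty :=
  stmt_11_general T hT n
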